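/- arXiv:1310.5612 — 3 statements merged into one kernel-verified Lean document; each statement's English description precedes it below -/
import Mathlib

section
/- For all quaternions e, x ∈ ℍ, the QLMS update term Δ = ½ e x* − ¼ x* e* decomposes as: re(Δ) = ¼ re(e) re(x) − ¾ re(e · Im(x)) and Im(Δ) = ¾ re(x) Im(e) − ¼ Im(e · Im(x)), i.e., the QLMS update has weighting coefficients a = d = ¼ and b = c = ¾ in the generic decomposition re(Δ) = a re(e · re(x)) − b re(e · Im(x)), Im(Δ) = c Im(e · re(x)) − d Im(e · Im(x)). -/
open scoped Quaternion

/-!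
Write `x = re x + Im x`. Then `e x* = (re x) e - e Im x`, and `x* e* = (e x)*` with
`e x = (re x) e + e Im x`; conjugation fixes real parts and negates vector parts. Hence for
`Δ = α e x* - β x* e*` the weights of the generic decomposition are `a = d = α - β` and
`b = c = α + β`, which for QLMS (`α = 1/2`, `β = 1/4`) are `1/4` and `3/4`.
-/

def qIm (q : ℍ[ℝ]) : ℍ[ℝ] := q - (q.re : ℍ[ℝ])

namespace Quaternion

variable {R : Type*} [CommRing R]

theorem star_eq_re_sub_im (a : ℍ[R]) : star a = ↑a.re - a.im := by
  ext <;> simp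

theorem mul_eq_re_smul_add_mul_im (e x : ℍ[R]) : e * x = x.re • e + e * x.im := by
  conv_lhs => rw [← x.re_add_im]
  rw [mul_add, mul_coe_eq_smul]

theorem mul_star_eq_re_smul_sub_mul_im (e x : ℍ[R]) : e * star x = x.re • e - e * x.im := by
  rw [star_eq_re_sub_im, mul_sub, mul_coe_eq_smul]

variable (α β : R) (e x : ℍ[R])

theorem re_smul_mul_star_sub_smul_star_mul :
    (α • (e * star x) - β • (star x * star e)).re =
      (α - β) * e.re * x.re - (α + β) * (e * x.im).re := by
  rw [← star_mul, mul_star_eq_re_smul_sub_mul_im e x, mul_eq_re_smul_add_mul_im e x]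
  simp only [re_sub, re_smul, re_star, re_add, smul_eq_mul]
  ring

theorem im_smul_mul_star_sub_smul_star_mul :
    (α • (e * star x) - β • (star x * star e)).im =
      ((α + β) * x.re) • e.im - (α - β) • (e * x.im).im := by
  rw [← star_mul, mul_star_eq_re_smul_sub_mul_im e x, mul_eq_re_smul_add_mul_im e x]
  simp only [im_sub, im_smul, im_star, im_add]
  module

end Quaternion

theorem qIm_eq_im (q : ℍ[ℝ]) : qIm q = q.im := q.sub_re_self

theorem QLMS_update_decomposition (e x : ℍ[ℝ])
    (Δ : ℍ[ℝ])
    (hΔ : Δ = (1 / 2 : ℝ) • (e * star x) - (1 / 4 : ℝ) • (star x * star e)) :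
    Δ.re = (1 / 4 : ℝ) * e.re * x.re - (3 / 4 : ℝ) * (e * qIm x).re ∧
    qIm Δ = ((3 / 4 : ℝ) * x.re) • qIm e - (1 / 4 : ℝ) • qIm (e * qIm x) := by
  subst hΔ
  simp only [qIm_eq_im, Quaternion.re_smul_mul_star_sub_smul_star_mul,
    Quaternion.im_smul_mul_star_sub_smul_star_mul]
  norm_num
end

section
/- Let N ∈ ℕ, r, x : Fin N → ℍ with x ≠ 0, e ∈ ℍ, μ ∈ ℝ. Define r'(m) = r(m) − μ x(m) e*, e_a = Σ_m (r(m))* x(m), e_p = Σ_m (r'(m))* x(m), and S = Σ_m ‖x(m)‖². Then the energy conservation relation holds: Σ_m ‖r'(m)‖² + ‖e_a‖² / S = Σ_m ‖r(m)‖² + ‖e_p‖² / S. -/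
/-!
Since `star x * x = ‖x‖²` is real, hence central, the update changes the a priori error linearly:
`e_p = e_a - μ S e`. Expanding `‖r(m) - μ x(m) e*‖²` and summing, the weight energy changes by
`-2μ⟪e_a, e⟫ + μ² S ‖e‖²`, which is exactly `(‖e_p‖² - ‖e_a‖²) / S`. If `S = 0` the input vanishes
and nothing changes.
-/

open scoped Quaternion RealInnerProductSpace

namespace Quaternion

theorem inner_mul_star_right (r x e : ℍ[ℝ]) : ⟪r, x * star e⟫ = ⟪star r * x, e⟫ := by
  simp only [inner_def, star_mul, star_star, re_mul, imI_mul, imJ_mul, imK_mul, re_star, imI_star,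
    imJ_star, imK_star]
  ring

theorem star_mul_star_mul_self (x e : ℍ[ℝ]) : star (x * star e) * x = (‖x‖ ^ 2) • e := by
  rw [star_mul, star_star, mul_assoc, star_mul_self, mul_coe_eq_smul, normSq_eq_norm_mul_self, sq]

variable {ι : Type*} [Fintype ι]

theorem sum_star_sub_smul_mul (r x : ι → ℍ[ℝ]) (e : ℍ[ℝ]) (μ : ℝ) :
    ∑ m, star (r m - μ • (x m * star e)) * x m
      = ∑ m, star (r m) * x m - (μ * ∑ m, ‖x m‖ ^ 2) • e := by
  simp only [star_sub, star_smul, sub_mul, smul_mul_assoc, star_mul_star_mul_self, smul_smul,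
    Finset.sum_sub_distrib, ← Finset.sum_smul, ← Finset.mul_sum]

theorem sum_norm_sub_smul_sq (r x : ι → ℍ[ℝ]) (e : ℍ[ℝ]) (μ : ℝ) :
    ∑ m, ‖r m - μ • (x m * star e)‖ ^ 2
      = ∑ m, ‖r m‖ ^ 2 - 2 * μ * ⟪∑ m, star (r m) * x m, e⟫
        + μ ^ 2 * (∑ m, ‖x m‖ ^ 2) * ‖e‖ ^ 2 := by
  have h m : ‖r m - μ • (x m * star e)‖ ^ 2
      = ‖r m‖ ^ 2 - 2 * μ * ⟪star (r m) * x m, e⟫ + μ ^ 2 * ‖x m‖ ^ 2 * ‖e‖ ^ 2 := by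
    rw [norm_sub_sq_real, real_inner_smul_right, inner_mul_star_right, norm_smul, norm_mul,
      norm_star, Real.norm_eq_abs, mul_pow, mul_pow, sq_abs]
    ring
  simp only [h, Finset.sum_add_distrib, Finset.sum_sub_distrib, ← Finset.mul_sum, ← Finset.sum_mul,
    sum_inner]

end Quaternion

open Quaternion in
theorem energy_conservation_relation_general (N : ℕ) (r x : Fin N → ℍ[ℝ]) (e : ℍ[ℝ]) (μ : ℝ)
    (r' : Fin N → ℍ[ℝ]) (hr' : ∀ m, r' m = r m - μ • (x m * star e))
    (ea ep : ℍ[ℝ]) (S : ℝ)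
    (hea : ea = ∑ m, star (r m) * x m)
    (hep : ep = ∑ m, star (r' m) * x m)
    (hS : S = ∑ m, ‖x m‖ ^ 2) :
    (∑ m, ‖r' m‖ ^ 2) + ‖ea‖ ^ 2 / S = (∑ m, ‖r m‖ ^ 2) + ‖ep‖ ^ 2 / S := by
  have hr'_eq : r' = fun m ↦ r m - μ • (x m * star e) := funext hr'
  subst hr'_eq
  rw [hep, sum_star_sub_smul_mul, ← hea, ← hS, sum_norm_sub_smul_sq, ← hea, ← hS]
  rcases eq_or_ne S 0 with hS0 | hS0
  · have hx : x = 0 := by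
      funext m
      simpa using (Finset.sum_eq_zero_iff_of_nonneg (fun m _ ↦ sq_nonneg ‖x m‖)).mp
        (hS ▸ hS0) m (Finset.mem_univ m)
    simp [hea, hS0, hx]
  · rw [norm_sub_sq_real, real_inner_smul_right, norm_smul, Real.norm_eq_abs, mul_pow, sq_abs]
    field_simp
    ring

theorem energy_conservation_relation (N : ℕ) (r x : Fin N → ℍ[ℝ]) (e : ℍ[ℝ]) (μ : ℝ)
    (hx : x ≠ 0)
    (r' : Fin N → ℍ[ℝ]) (hr' : ∀ m, r' m = r m - μ • (x m * star e))
    (ea ep : ℍ[ℝ]) (S : ℝ)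
    (hea : ea = ∑ m, star (r m) * x m)
    (hep : ep = ∑ m, star (r' m) * x m)
    (hS : S = ∑ m, ‖x m‖ ^ 2) :
    (∑ m, ‖r' m‖ ^ 2) + ‖ea‖ ^ 2 / S = (∑ m, ‖r m‖ ^ 2) + ‖ep‖ ^ 2 / S :=
  energy_conservation_relation_general N r x e μ r' hr' ea ep S hea hep hS
end

section
/- For all quaternions e, x ∈ ℍ: x* + (x^i)* + (x^j)* + (x^k)* = 4 re(x) (a real quaternion), and consequently the real parts of the four WL-IQLMS channel update terms sum according to ½ ( re(e x*) + re(e (x^i)*) + re(e (x^j)*) + re(e (x^k)*) ) = 2 re(e) re(x), establishing the duality between the WL-IQLMS update and the corresponding four-channel real LMS update. -/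
open scoped Quaternion

/-- The imaginary unit `i` of the real quaternions. -/
def qi : ℍ[ℝ] := ⟨0, 1, 0, 0⟩
/-- The imaginary unit `j` of the real quaternions. -/
def qj : ℍ[ℝ] := ⟨0, 0, 1, 0⟩
/-- The imaginary unit `k` of the real quaternions. -/
def qk : ℍ[ℝ] := ⟨0, 0, 0, 1⟩

/-- The quaternion involution `q ↦ -η * q * η`. -/
noncomputable def qinv (η q : ℍ[ℝ]) : ℍ[ℝ] := -η * q * η

/-! Each involution `q ↦ q^η` fixes the real part and the `η`-component of `q` and negates the
other two imaginary components, so in `q + q^i + q^j + q^k` every imaginary component cancels. -/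

theorem Quaternion.re_mul_coe {R : Type*} [CommRing R] (e : ℍ[R]) (r : R) :
    (e * (r : ℍ[R])).re = e.re * r := by
  rw [Quaternion.mul_coe_eq_smul, Quaternion.re_smul, smul_eq_mul, mul_comm]

section Involutions

open Quaternion

theorem qinv_qi (x : ℍ[ℝ]) : qinv qi x = ⟨x.re, x.imI, -x.imJ, -x.imK⟩ := by
  ext <;> simp only [qinv, neg_mul, re_neg, imI_neg, imJ_neg, imK_neg, re_mul, imI_mul, imJ_mul,
    imK_mul] <;> simp [qi]

theorem qinv_qj (x : ℍ[ℝ]) : qinv qj x = ⟨x.re, -x.imI, x.imJ, -x.imK⟩ := by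
  ext <;> simp only [qinv, neg_mul, re_neg, imI_neg, imJ_neg, imK_neg, re_mul, imI_mul, imJ_mul,
    imK_mul] <;> simp [qj]

theorem qinv_qk (x : ℍ[ℝ]) : qinv qk x = ⟨x.re, -x.imI, -x.imJ, x.imK⟩ := by
  ext <;> simp only [qinv, neg_mul, re_neg, imI_neg, imJ_neg, imK_neg, re_mul, imI_mul, imJ_mul,
    imK_mul] <;> simp [qk]

theorem add_qinv_qi_add_qinv_qj_add_qinv_qk (x : ℍ[ℝ]) :
    x + qinv qi x + qinv qj x + qinv qk x = ((4 * x.re : ℝ) : ℍ[ℝ]) := by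
  ext <;> simp only [re_add, imI_add, imJ_add, imK_add, re_coe, imI_coe, imJ_coe, imK_coe] <;>
    rw [qinv_qi, qinv_qj, qinv_qk] <;> ring

theorem star_add_star_qinv_qi_add_star_qinv_qj_add_star_qinv_qk (x : ℍ[ℝ]) :
    star x + star (qinv qi x) + star (qinv qj x) + star (qinv qk x)
      = ((4 * x.re : ℝ) : ℍ[ℝ]) := by
  simp only [← star_add, add_qinv_qi_add_qinv_qj_add_qinv_qk, star_coe]

end Involutions

theorem WL_IQLMS_four_channel_real_LMS_duality (e x : ℍ[ℝ]) :
    star x + star (qinv qi x) + star (qinv qj x) + star (qinv qk x)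
      = ((4 * x.re : ℝ) : ℍ[ℝ]) ∧
    (1 / 2 : ℝ) * ((e * star x).re + (e * star (qinv qi x)).re +
        (e * star (qinv qj x)).re + (e * star (qinv qk x)).re)
      = 2 * e.re * x.re := by
  have conj_sum := star_add_star_qinv_qi_add_star_qinv_qj_add_star_qinv_qk x
  refine ⟨conj_sum, ?_⟩
  calc (1 / 2 : ℝ) * ((e * star x).re + (e * star (qinv qi x)).re +
        (e * star (qinv qj x)).re + (e * star (qinv qk x)).re)
      = (1 / 2 : ℝ) * (e * (star x + star (qinv qi x) + star (qinv qj x) +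
          star (qinv qk x))).re := by simp only [mul_add, Quaternion.re_add]
    _ = 2 * e.re * x.re := by rw [conj_sum, Quaternion.re_mul_coe]; ring
end
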